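/- arXiv:2009.06840 — 2 statements merged into one kernel-verified Lean document; each statement's English description precedes it below -/
import Mathlib

section
/- Any C_4-free spanning subgraph G of the complete transposition graph CT_n (n ≥ 3) satisfies e(G) ≤ (3/4)·e(CT_n). -/
/-!
In a `C₄`-free graph two vertices have at most one common neighbour, so the ordered pairs of
distinct neighbours of the various vertices `v` are pairwise different. In a subgraph of `CT n`
such a pair `(x, y)` has `y x⁻¹ = (y v⁻¹)(v x⁻¹)`, a product of two distinct transpositions, and
every such product `s t` arises at least twice, also as `(s t s⁻¹) s`. With `T = n.choose 2` this
gives `∑ d(v) (d(v) - 1) ≤ n! T (T - 1) / 2`, and by Cauchy–Schwarz the average degree `d` satisfies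
`d² - d ≤ T (T - 1) / 2`, which forces `d ≤ 3T/4` once `T ≥ 4`; for `n = 3` integrality decides.
-/

/-- The complete transposition graph: the Cayley graph on the symmetric group
`Equiv.Perm (Fin n)` whose connection set is the set of all transpositions. -/
def CT (n : ℕ) : SimpleGraph (Equiv.Perm (Fin n)) where
  Adj x y := (y * x⁻¹).IsSwap
  symm := by
    constructor
    rintro x y ⟨a, b, hab, h⟩
    refine ⟨a, b, hab, ?_⟩
    rw [← Equiv.swap_inv a b, ← h, mul_inv_rev, inv_inv]
  loopless := by
    constructor
    rintro x ⟨a, b, hab, h⟩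
    rw [mul_inv_cancel] at h
    have hba : b = a := by
      simpa [Equiv.swap_apply_left] using congrArg (fun f => f a) h.symm
    exact hab hba.symm

open Finset Nat

namespace Equiv.Perm
variable {α : Type*} [DecidableEq α]

theorem card_isSwap [Fintype α] [DecidablePred (IsSwap : Perm α → Prop)] :
    #{σ : Perm α | σ.IsSwap} = (Fintype.card α).choose 2 := by
  have h := card_of_cycleType_mul_eq α {2}
  simp only [Multiset.sum_singleton, Multiset.prod_singleton, Multiset.toFinset_singleton,
    Multiset.count_singleton_self, prod_singleton, Nat.factorial_one, mul_one,
    Multiset.mem_singleton, forall_eq, le_refl, and_true] at h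
  simp only [isSwap_iff_cycleType]
  have hpos : 0 < (Fintype.card α - 2)! * 2 := by positivity
  split_ifs at h with hα
  · rw [← Nat.choose_mul_factorial_mul_factorial hα, Nat.factorial_two, mul_assoc,
      mul_comm 2] at h
    convert Nat.eq_of_mul_eq_mul_right hpos h
  · rw [Nat.choose_eq_zero_of_lt (not_le.mp hα)]
    convert (Nat.mul_eq_zero.mp h).resolve_right hpos.ne'

theorem IsSwap.inv_eq {σ : Perm α} (h : σ.IsSwap) : σ⁻¹ = σ := by
  obtain ⟨a, b, -, rfl⟩ := h
  exact swap_inv a b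

theorem IsSwap.conj {σ τ : Perm α} (h : τ.IsSwap) : (σ * τ * σ⁻¹).IsSwap := by
  obtain ⟨a, b, hab, rfl⟩ := h
  exact ⟨σ a, σ b, σ.injective.ne hab, (swap_apply_apply σ a b).symm⟩

end Equiv.Perm

namespace SimpleGraph
variable {V : Type*} {G : SimpleGraph V}

theorem eq_of_adj_of_forall_isCycle_length_ne_four
    (hfree : ∀ (v : V) (c : G.Walk v v), c.IsCycle → c.length ≠ 4) {v w x y : V} (hxy : x ≠ y)
    (hvx : G.Adj v x) (hvy : G.Adj v y) (hwx : G.Adj w x) (hwy : G.Adj w y) : v = w := by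
  by_contra hvw
  refine hfree x (.cons hvx.symm (.cons hvy (.cons hwy.symm (.cons hwx .nil)))) ?_ rfl
  have := hvx.ne; have := hvy.ne; have := hwx.ne; have := hwy.ne
  simp only [Walk.cons_isCycle_iff, Walk.cons_isPath_iff, Walk.isPath_iff_nil, Walk.support_nil,
    List.mem_cons, List.not_mem_nil, or_false, true_and, Walk.support_cons, not_or,
    Walk.edges_cons, Walk.edges_nil, Sym2.eq, Sym2.rel_iff', Prod.mk.injEq, Prod.swap_prod_mk,
    and_true, not_and]
  tauto

variable [Fintype V] [DecidableEq V] [DecidableRel G.Adj]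

theorem sum_degree_sq_le_of_forall_isCycle_length_ne_four
    (hfree : ∀ (v : V) (c : G.Walk v v), c.IsCycle → c.length ≠ 4) {P : Finset (V × V)}
    (hP : ∀ v x y, G.Adj v x → G.Adj v y → x ≠ y → (x, y) ∈ P) :
    ∑ v, G.degree v ^ 2 ≤ 2 * #G.edgeFinset + #P := by
  have hdisj :
      ((univ : Finset V) : Set V).PairwiseDisjoint fun v ↦ (G.neighborFinset v).offDiag := by
    rintro v - w - hvw
    refine Finset.disjoint_left.mpr fun ⟨x, y⟩ hv hw ↦ hvw ?_
    simp only [mem_offDiag, mem_neighborFinset] at hv hw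
    exact eq_of_adj_of_forall_isCycle_length_ne_four hfree hv.2.2 hv.1 hv.2.1 hw.1 hw.2.1
  have hsub : univ.biUnion (fun v ↦ (G.neighborFinset v).offDiag) ⊆ P := by
    intro ⟨x, y⟩ h
    simp only [mem_biUnion, mem_univ, true_and, mem_offDiag, mem_neighborFinset] at h
    obtain ⟨v, hvx, hvy, hxy⟩ := h
    exact hP v x y hvx hvy hxy
  calc ∑ v, G.degree v ^ 2 = ∑ v, G.degree v + ∑ v, #(G.neighborFinset v).offDiag := by
        rw [← sum_add_distrib]
        refine sum_congr rfl fun v _ ↦ ?_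
        rw [offDiag_card, card_neighborFinset_eq_degree, sq]
        have := Nat.le_mul_self (G.degree v)
        omega
    _ ≤ 2 * #G.edgeFinset + #P := by
        rw [sum_degrees_eq_twice_card_edges, ← card_biUnion hdisj]
        exact Nat.add_le_add_left (card_le_card hsub) _

end SimpleGraph

section Group
variable {M : Type*} [Group M] [DecidableEq M]

theorem two_mul_card_image_mul_offDiag_le {X : Finset M}
    (hX : ∀ s ∈ X, ∀ t ∈ X, s * t * s⁻¹ ∈ X) :
    2 * #(X.offDiag.image fun p ↦ p.1 * p.2) ≤ #X.offDiag := by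
  refine mul_card_image_le_card _ 2 fun q hq ↦ ?_
  obtain ⟨⟨s, t⟩, hst, rfl⟩ := mem_image.mp hq
  obtain ⟨hs, ht, hne⟩ := mem_offDiag.mp hst
  -- `s * t = (s * t * s⁻¹) * s`, and `s * t * s⁻¹ ≠ s` because `t ≠ s`
  have hconj : s * t * s⁻¹ ≠ s := by
    rw [Ne, mul_inv_eq_iff_eq_mul, mul_left_cancel_iff]
    exact hne.symm
  refine one_lt_card.mpr
    ⟨(s, t), ?_, (s * t * s⁻¹, s), ?_, fun h ↦ hconj (congrArg Prod.fst h).symm⟩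
  · simp [hs, ht, hne]
  · simp [hs, hX s hs t ht, hconj]

theorem mul_inv_mem_image_mul_offDiag {X : Finset M} (hX : ∀ s ∈ X, s⁻¹ = s)
    {G : SimpleGraph M} (hG : ∀ x y, G.Adj x y → y * x⁻¹ ∈ X) {v x y : M}
    (hvx : G.Adj v x) (hvy : G.Adj v y) (hxy : x ≠ y) :
    y * x⁻¹ ∈ X.offDiag.image fun p ↦ p.1 * p.2 := by
  have hxv : v * x⁻¹ = x * v⁻¹ := by rw [← hX _ (hG _ _ hvx), mul_inv_rev, inv_inv]
  refine mem_image.mpr ⟨(y * v⁻¹, v * x⁻¹), mem_offDiag.mpr ⟨hG _ _ hvy, hG _ _ hvx.symm, ?_⟩,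
    by group⟩
  rw [hxv, Ne, mul_left_inj]
  exact hxy.symm

theorem SimpleGraph.two_mul_sum_degree_sq_le_of_adj_mul_inv_mem [Fintype M] {X : Finset M}
    (hinv : ∀ s ∈ X, s⁻¹ = s) (hconj : ∀ s ∈ X, ∀ t ∈ X, s * t * s⁻¹ ∈ X)
    {G : SimpleGraph M} [DecidableRel G.Adj] (hG : ∀ x y, G.Adj x y → y * x⁻¹ ∈ X)
    (hfree : ∀ (v : M) (c : G.Walk v v), c.IsCycle → c.length ≠ 4) :
    2 * ∑ v, G.degree v ^ 2 ≤ 4 * #G.edgeFinset + Fintype.card M * #X.offDiag := by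
  set S := X.offDiag.image fun p ↦ p.1 * p.2
  have hP := G.sum_degree_sq_le_of_forall_isCycle_length_ne_four hfree
    (P := (univ ×ˢ S).image fun p ↦ (p.1, p.2 * p.1)) fun v x y hvx hvy hxy ↦
      mem_image.mpr ⟨(x, y * x⁻¹), mem_product.mpr ⟨mem_univ x,
        mul_inv_mem_image_mul_offDiag hinv hG hvx hvy hxy⟩, by simp⟩
  calc 2 * ∑ v, G.degree v ^ 2 ≤ 2 * (2 * #G.edgeFinset + Fintype.card M * #S) := by
        grw [hP, Finset.card_image_le, card_product, Finset.card_univ]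
    _ = 4 * #G.edgeFinset + Fintype.card M * (2 * #S) := by ring
    _ ≤ 4 * #G.edgeFinset + Fintype.card M * #X.offDiag := by
        grw [two_mul_card_image_mul_offDiag_le hconj]

end Group

section CompleteTranspositionGraph
open SimpleGraph
variable {n : ℕ} [DecidableRel (CT n).Adj]

theorem CT_degree (x : Equiv.Perm (Fin n)) : (CT n).degree x = n.choose 2 := by
  classical
  have : (CT n).neighborFinset x = ({σ | σ.IsSwap} : Finset _).image (· * x) := by
    ext y
    simp only [mem_neighborFinset, mem_image, mem_filter, mem_univ, true_and]
    exact ⟨fun h ↦ ⟨y * x⁻¹, h, by group⟩, by rintro ⟨σ, hσ, rfl⟩; simpa [CT] using hσ⟩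
  rw [← card_neighborFinset_eq_degree, this, card_image_of_injective _ (mul_left_injective x),
    Equiv.Perm.card_isSwap, Fintype.card_fin]

theorem two_mul_card_edgeFinset_CT : 2 * #(CT n).edgeFinset = n ! * n.choose 2 := by
  rw [← sum_degrees_eq_twice_card_edges]
  simp [CT_degree, Fintype.card_perm]

end CompleteTranspositionGraph

theorem eight_mul_le_three_mul_of_sq_le {N T E Q : ℕ} (hT : 4 ≤ T ∨ N = 6 ∧ T = 3)
    (hcs : (2 * E) ^ 2 ≤ N * Q) (hQ : 2 * Q ≤ 4 * E + N * (T * T - T)) :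
    8 * E ≤ 3 * (N * T) := by
  obtain ⟨U, hU⟩ : ∃ U, T * T = U + T := ⟨T * T - T, (Nat.sub_add_cancel (Nat.le_mul_self T)).symm⟩
  rw [hU, Nat.add_sub_cancel] at hQ
  have key : 8 * E ^ 2 + N ^ 2 * T ≤ 4 * N * E + N ^ 2 * T ^ 2 := by nlinarith
  by_contra! h
  rw [← mul_assoc] at h
  rcases hT with hT | ⟨rfl, rfl⟩
  · -- `x ↦ x ^ 2 - 4 N x` is increasing past `3 N T`, where it already exceeds `8 N² (T² - T)`
    zify at key h hT
    nlinarith [mul_pos (sub_pos.mpr h) (by nlinarith : (0 : ℤ) < 8 * E + 3 * N * T - 4 * N),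
      mul_nonneg (mul_nonneg (sq_nonneg (N : ℤ)) (by positivity : (0 : ℤ) ≤ T)) (sub_nonneg.mpr hT)]
  · have hE : 7 ≤ E := by omega
    nlinarith [Nat.mul_le_mul hE hE]

/-- Any `C₄`-free (spanning) subgraph `G` of `CT n` has at most `(3/4) e(CT n)` edges. -/
theorem stmt_16 {n : ℕ} (hn : 3 ≤ n) (G : SimpleGraph (Equiv.Perm (Fin n))) (hG : G ≤ CT n)
    (hfree : ∀ (v : Equiv.Perm (Fin n)) (c : G.Walk v v), c.IsCycle → c.length ≠ 4) :
    4 * Nat.card G.edgeSet ≤ 3 * Nat.card (CT n).edgeSet := by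
  classical
  let X : Finset (Equiv.Perm (Fin n)) := {σ | σ.IsSwap}
  have hsq := G.two_mul_sum_degree_sq_le_of_adj_mul_inv_mem (X := X)
    (fun s hs ↦ (mem_filter.mp hs).2.inv_eq)
    (fun s _ t ht ↦ mem_filter.mpr ⟨mem_univ _, (mem_filter.mp ht).2.conj⟩)
    (fun x y h ↦ mem_filter.mpr ⟨mem_univ _, hG h⟩) hfree
  have hcs := sq_sum_le_card_mul_sum_sq (s := univ) (f := fun v ↦ G.degree v)
  rw [G.sum_degrees_eq_twice_card_edges] at hcs
  rw [offDiag_card, Equiv.Perm.card_isSwap] at hsq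
  have hT : 4 ≤ n.choose 2 ∨ n ! = 6 ∧ n.choose 2 = 3 := by
    rcases hn.eq_or_lt with rfl | h4
    · decide
    · exact .inl ((Nat.choose_le_choose 2 h4).trans' (by decide))
  have h8 := eight_mul_le_three_mul_of_sq_le hT (by simpa [Fintype.card_perm] using hcs)
    (by simpa [Fintype.card_perm] using hsq)
  have hCT := two_mul_card_edgeFinset_CT (n := n)
  simp only [Nat.card_eq_fintype_card, ← SimpleGraph.edgeFinset_card]
  omega
end

section
/- Suppose G is a spanning subgraph of CT_n and C = (u_1, ..., u_l, u_1) is an l-cycle (l ≥ 3) such that for each j there exists w_j ∉ {x} with (u_j, w_j, u_{j+1}) a 2-path in G, where all u_j are neighbors of a common vertex x in CT_n and consecutive u_j, u_{j+1} satisfy the conditions of the auxiliary graph G_x^i (their edges to x have supports intersecting in δ_i points). Then G contains a 2l-cycle, namely (u_1, w_1, u_2, w_2, ..., u_l, w_l, u_1) with the w_j pairwise distinct. -/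
/-!
If two of the midpoints coincide, `w = w i = w j`, then `w ≠ x` has three distinct common
neighbours among `u i, u (i + 1), u j, u (j + 1)`. Each common neighbour `u` factors
`g = x * w⁻¹` as the product of the transpositions `u * x⁻¹` and `u * w⁻¹`. A product of two
disjoint transpositions has only two such factorizations, so `g` is a 3-cycle and every
`u * x⁻¹` is a transposition inside its 3-point support. Both hypotheses on the supports
(two consecutive ones disjoint, or three of them through a common point) need four points.
Finally no `u k` equals a `w j`, because `CT n` is bipartite by sign, so
`u 0, w 0, u 1, …, w (l - 1)` is a `2l`-cycle.
-/

namespace Equiv.Perm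

variable {α : Type*} [DecidableEq α]

theorem IsSwap.eq_swap_of_apply_eq {s : Perm α} (hs : s.IsSwap) {p q : α} (hpq : p ≠ q)
    (h : s p = q) : s = swap p q := by
  obtain ⟨a, b, -, rfl⟩ := hs
  rcases eq_or_ne p a with rfl | hpa
  · rw [swap_apply_left] at h; rw [h]
  rcases eq_or_ne p b with rfl | hpb
  · rw [swap_apply_right] at h; rw [h, swap_comm]
  · exact absurd (swap_apply_of_ne_of_ne hpa hpb ▸ h) hpq

theorem IsSwap.mul_mul_cancel_left {t : Perm α} (ht : t.IsSwap) (g : Perm α) :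
    t * (t * g) = g := by
  obtain ⟨a, b, -, rfl⟩ := ht
  rw [← mul_assoc, swap_mul_self, one_mul]

variable [Fintype α]

theorem IsSwap.eq_of_apply_eq {s t : Perm α} (hs : s.IsSwap) (ht : t.IsSwap) {p : α}
    (hp : p ∈ s.support) (h : s p = t p) : s = t :=
  (hs.eq_swap_of_apply_eq (mem_support.mp hp).symm rfl).trans
    (ht.eq_swap_of_apply_eq (mem_support.mp hp).symm h.symm).symm

theorem IsSwap.support_subset_of_mul {t g : Perm α} (ht : t.IsSwap) (hg : g ≠ 1)
    (htg : (t * g).IsSwap) : t.support ⊆ g.support := by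
  intro p hp
  by_contra hpg
  have h : (t * g) p = t p := by rw [mul_apply, notMem_support.mp hpg]
  have := htg.eq_of_apply_eq ht (by rwa [mem_support, h, ← mem_support]) h
  exact hg (mul_eq_left.mp this)

theorem eq_or_eq_of_mul_eq_mul_of_disjoint {t s t' s' : Perm α} (ht : t.IsSwap) (hs : s.IsSwap)
    (ht' : t'.IsSwap) (hd : _root_.Disjoint t.support s.support)
    (hd' : _root_.Disjoint t'.support s'.support) (h : t * s = t' * s') : t' = t ∨ t' = s := by
  obtain ⟨a, ha⟩ : t'.support.Nonempty :=
    Finset.card_pos.mp (by rw [card_support_eq_two.mpr ht']; omega)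
  have hta : t' a = (t * s) a := by
    rw [h, mul_apply, notMem_support.mp (Finset.disjoint_left.mp hd' ha)]
  have hmem : a ∈ t.support ∪ s.support := support_mul_le t s <| by
    rw [mem_support, ← hta]; exact mem_support.mp ha
  rcases Finset.mem_union.mp hmem with hat | has
  · left
    refine ht'.eq_of_apply_eq ht ha ?_
    rw [hta, mul_apply, notMem_support.mp (Finset.disjoint_left.mp hd hat)]
  · right
    refine ht'.eq_of_apply_eq hs ha ?_
    rw [hta, mul_apply,
      notMem_support.mp (Finset.disjoint_right.mp hd (apply_mem_support.mpr has))]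

theorem card_support_eq_three_of_isSwap_mul {t g : Perm α} (ht : t.IsSwap) (hg : g ≠ 1)
    (htg : (t * g).IsSwap) (hd : ¬_root_.Disjoint t.support (t * g).support) :
    g.support.card = 3 := by
  have hg_eq := ht.mul_mul_cancel_left g
  have hle : g.support.card ≤ 3 := by
    have hsub : g.support ⊆ t.support ∪ (t * g).support := by
      have h := support_mul_le t (t * g)
      rw [hg_eq] at h
      exact h
    have hinter : 1 ≤ (t.support ∩ (t * g).support).card :=
      Finset.card_pos.mpr (Finset.not_disjoint_iff_nonempty_inter.mp hd)
    have := Finset.card_union_add_card_inter t.support (t * g).support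
    have := Finset.card_le_card hsub
    rw [card_support_eq_two.mpr ht, card_support_eq_two.mpr htg] at *
    omega
  have hne_two : g.support.card ≠ 2 := fun h2 => by
    have hsign := (card_support_eq_two.mp h2).sign_eq
    rw [← hg_eq, map_mul, ht.sign_eq, htg.sign_eq] at hsign
    exact absurd hsign (by decide)
  have hne_zero : g.support.card ≠ 0 := by
    rwa [Ne, Finset.card_eq_zero, support_eq_empty_iff]
  have := card_support_ne_one g
  omega

theorem card_support_eq_three_of_three_isSwap_mul {t₁ t₂ t₃ g : Perm α} (hg : g ≠ 1)
    (h₁ : t₁.IsSwap) (h₂ : t₂.IsSwap) (h₃ : t₃.IsSwap)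
    (h₁₂ : t₁ ≠ t₂) (h₁₃ : t₁ ≠ t₃) (h₂₃ : t₂ ≠ t₃)
    (m₁ : (t₁ * g).IsSwap) (m₂ : (t₂ * g).IsSwap) (m₃ : (t₃ * g).IsSwap) :
    g.support.card = 3 := by
  by_contra hg3
  have hd : ∀ t : Perm α, t.IsSwap → (t * g).IsSwap → _root_.Disjoint t.support (t * g).support :=
    fun t ht htg => by_contra fun hd => hg3 (card_support_eq_three_of_isSwap_mul ht hg htg hd)
  -- `g` is a product of two disjoint transpositions, and such a factorization is unique up to order
  have e₂ := eq_or_eq_of_mul_eq_mul_of_disjoint h₁ m₁ h₂ (hd t₁ h₁ m₁) (hd t₂ h₂ m₂)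
    ((h₁.mul_mul_cancel_left g).trans (h₂.mul_mul_cancel_left g).symm)
  have e₃ := eq_or_eq_of_mul_eq_mul_of_disjoint h₁ m₁ h₃ (hd t₁ h₁ m₁) (hd t₃ h₃ m₃)
    ((h₁.mul_mul_cancel_left g).trans (h₃.mul_mul_cancel_left g).symm)
  rcases e₂ with e₂ | e₂
  · exact h₁₂ e₂.symm
  rcases e₃ with e₃ | e₃
  · exact h₁₃ e₃.symm
  exact h₂₃ (e₂.trans e₃.symm)

theorem IsSwap.four_le_card_of_disjoint_support {t₁ t₂ : Perm α} (h₁ : t₁.IsSwap)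
    (h₂ : t₂.IsSwap) (hd : _root_.Disjoint t₁.support t₂.support) {S : Finset α}
    (hS₁ : t₁.support ⊆ S) (hS₂ : t₂.support ⊆ S) : 4 ≤ S.card := by
  have := Finset.card_le_card (Finset.union_subset hS₁ hS₂)
  rwa [Finset.card_union_of_disjoint hd, card_support_eq_two.mpr h₁,
    card_support_eq_two.mpr h₂] at this

theorem IsSwap.four_le_card_of_mem_support {t₁ t₂ t₃ : Perm α} (h₁ : t₁.IsSwap)
    (h₂ : t₂.IsSwap) (h₃ : t₃.IsSwap) (h₁₂ : t₁ ≠ t₂) (h₁₃ : t₁ ≠ t₃) (h₂₃ : t₂ ≠ t₃) {p : α}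
    (hp₁ : p ∈ t₁.support) (hp₂ : p ∈ t₂.support) (hp₃ : p ∈ t₃.support) {S : Finset α}
    (hS₁ : t₁.support ⊆ S) (hS₂ : t₂.support ⊆ S) (hS₃ : t₃.support ⊆ S) : 4 ≤ S.card := by
  have hsub : ({p, t₁ p, t₂ p, t₃ p} : Finset α) ⊆ S := by
    simp only [Finset.insert_subset_iff, Finset.singleton_subset_iff]
    exact ⟨hS₁ hp₁, hS₁ (apply_mem_support.mpr hp₁), hS₂ (apply_mem_support.mpr hp₂),
      hS₃ (apply_mem_support.mpr hp₃)⟩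
  have n₁₂ : t₁ p ≠ t₂ p := fun h => h₁₂ (h₁.eq_of_apply_eq h₂ hp₁ h)
  have n₁₃ : t₁ p ≠ t₃ p := fun h => h₁₃ (h₁.eq_of_apply_eq h₃ hp₁ h)
  have n₂₃ : t₂ p ≠ t₃ p := fun h => h₂₃ (h₂.eq_of_apply_eq h₃ hp₂ h)
  have n₁ := (mem_support.mp hp₁).symm
  have n₂ := (mem_support.mp hp₂).symm
  have n₃ := (mem_support.mp hp₃).symm
  have hcard : ({p, t₁ p, t₂ p, t₃ p} : Finset α).card = 4 := by
    rw [Finset.card_insert_of_notMem (by simp [n₁, n₂, n₃]),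
      Finset.card_insert_of_notMem (by simp [n₁₂, n₁₃]),
      Finset.card_insert_of_notMem (by simp [n₂₃]), Finset.card_singleton]
  exact hcard ▸ Finset.card_le_card hsub

end Equiv.Perm

namespace CT

open Equiv.Perm

theorem not_adj_of_adj_of_adj {n : ℕ} {x a b : Equiv.Perm (Fin n)} (ha : (CT n).Adj x a)
    (hb : (CT n).Adj x b) : ¬(CT n).Adj a b := fun hab => by
  have hsign := hab.sign_eq
  rw [show b * a⁻¹ = (b * x⁻¹) * (a * x⁻¹)⁻¹ by group, map_mul, map_inv, ha.sign_eq,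
    hb.sign_eq] at hsign
  exact absurd hsign (by decide)

theorem exists_card_eq_three_of_commonNeighbors {n : ℕ} {x y u₁ u₂ u₃ : Equiv.Perm (Fin n)}
    (hxy : x ≠ y) (h₁₂ : u₁ ≠ u₂) (h₁₃ : u₁ ≠ u₃) (h₂₃ : u₂ ≠ u₃)
    (hu₁ : u₁ ∈ (CT n).commonNeighbors x y) (hu₂ : u₂ ∈ (CT n).commonNeighbors x y)
    (hu₃ : u₃ ∈ (CT n).commonNeighbors x y) :
    ∃ S : Finset (Fin n), S.card = 3 ∧
      ∀ u ∈ (CT n).commonNeighbors x y, (u * x⁻¹).support ⊆ S := by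
  have hg : x * y⁻¹ ≠ 1 := mul_inv_eq_one.not.mpr hxy
  have hswap : ∀ u ∈ (CT n).commonNeighbors x y,
      (u * x⁻¹).IsSwap ∧ ((u * x⁻¹) * (x * y⁻¹)).IsSwap := fun u hu => by
    obtain ⟨hxu, hyu⟩ := (CT n).mem_commonNeighbors.mp hu
    exact ⟨hxu, by rwa [show u * x⁻¹ * (x * y⁻¹) = u * y⁻¹ by group]⟩
  have hne : ∀ {a b : Equiv.Perm (Fin n)}, a ≠ b → a * x⁻¹ ≠ b * x⁻¹ :=
    (mul_left_injective x⁻¹).ne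
  refine ⟨(x * y⁻¹).support, ?_, fun u hu => (hswap u hu).1.support_subset_of_mul hg (hswap u hu).2⟩
  exact card_support_eq_three_of_three_isSwap_mul hg (hswap u₁ hu₁).1 (hswap u₂ hu₂).1
    (hswap u₃ hu₃).1 (hne h₁₂) (hne h₁₃) (hne h₂₃) (hswap u₁ hu₁).2 (hswap u₂ hu₂).2
    (hswap u₃ hu₃).2

theorem not_disjoint_and_notMem_support_of_commonNeighbors {n : ℕ}
    {x y u₁ u₂ u₃ : Equiv.Perm (Fin n)} (hxy : x ≠ y) (h₁₂ : u₁ ≠ u₂) (h₁₃ : u₁ ≠ u₃)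
    (h₂₃ : u₂ ≠ u₃) (hu₁ : u₁ ∈ (CT n).commonNeighbors x y)
    (hu₂ : u₂ ∈ (CT n).commonNeighbors x y) (hu₃ : u₃ ∈ (CT n).commonNeighbors x y) :
    ¬Disjoint (u₁ * x⁻¹).support (u₂ * x⁻¹).support ∧
      ∀ p ∈ (u₁ * x⁻¹).support, p ∈ (u₂ * x⁻¹).support → p ∉ (u₃ * x⁻¹).support := by
  obtain ⟨S, hS, hsub⟩ := exists_card_eq_three_of_commonNeighbors hxy h₁₂ h₁₃ h₂₃ hu₁ hu₂ hu₃
  have hne : ∀ {a b : Equiv.Perm (Fin n)}, a ≠ b → a * x⁻¹ ≠ b * x⁻¹ :=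
    (mul_left_injective x⁻¹).ne
  refine ⟨fun hd => ?_, fun p hp₁ hp₂ hp₃ => ?_⟩
  · have := IsSwap.four_le_card_of_disjoint_support hu₁.1 hu₂.1 hd (hsub u₁ hu₁) (hsub u₂ hu₂)
    omega
  · have := IsSwap.four_le_card_of_mem_support hu₁.1 hu₂.1 hu₃.1 (hne h₁₂) (hne h₁₃)
      (hne h₂₃) hp₁ hp₂ hp₃ (hsub u₁ hu₁) (hsub u₂ hu₂) (hsub u₃ hu₃)
    omega

end CT

namespace SimpleGraph

variable {V : Type*} {G : SimpleGraph V}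

theorem exists_isCycle_of_injOn {m : ℕ} (hm : 3 ≤ m) (f : ℕ → V)
    (hadj : ∀ k < m, G.Adj (f k) (f (k + 1))) (hclosed : f m = f 0)
    (hinj : Set.InjOn f (Set.Iio m)) :
    ∃ (v : V) (c : G.Walk v v), c.IsCycle ∧ c.length = m := by
  rw [← cycleGraph_isContained_iff (by omega)]
  have hstep : ∀ a b : Fin m, (a - b).val = 1 → G.Adj (f b) (f a) := by
    intro a b h
    rcases le_or_gt b a with hba | hab
    · rw [Fin.coe_sub_iff_le.mpr hba] at h
      simpa [show (a : ℕ) = b + 1 by omega] using hadj b b.2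
    · rw [Fin.coe_sub_iff_lt.mpr hab] at h
      have hb : (b : ℕ) + 1 = m := by omega
      simpa [show (a : ℕ) = 0 by omega, hb, hclosed] using hadj b b.2
  refine ⟨⟨⟨fun i => f i, fun {a b} hab => ?_⟩, fun a b hab => Fin.ext (hinj a.2 b.2 hab)⟩⟩
  rcases cycleGraph_adj'.mp hab with h | h
  · exact (hstep a b h).symm
  · exact hstep b a h

theorem exists_isCycle_of_zigzag {l : ℕ} (hl : 2 ≤ l) (u w : ℕ → V)
    (huw : ∀ j < l, G.Adj (u j) (w j)) (hwu : ∀ j < l, G.Adj (w j) (u (j + 1)))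
    (hclosed : u l = u 0) (hu : Set.InjOn u (Set.Iio l)) (hw : Set.InjOn w (Set.Iio l))
    (hne : ∀ i < l, ∀ j < l, u i ≠ w j) :
    ∃ (v : V) (c : G.Walk v v), c.IsCycle ∧ c.length = 2 * l := by
  set f : ℕ → V := fun k => if k % 2 = 0 then u (k / 2) else w (k / 2) with hf
  have f_even : ∀ j, f (2 * j) = u j := fun j => by simp [hf]
  have f_odd : ∀ j, f (2 * j + 1) = w j := fun j => by
    simp [hf, Nat.add_mod, show (2 * j + 1) / 2 = j by omega]
  refine exists_isCycle_of_injOn (by omega) f (fun k hk => ?_) ?_ ?_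
  · obtain ⟨j, rfl | rfl⟩ := Nat.even_or_odd' k
    · rw [f_even, f_odd]
      exact huw j (by omega)
    · rw [f_odd, show 2 * j + 1 + 1 = 2 * (j + 1) by ring, f_even]
      exact hwu j (by omega)
  · rw [f_even, hclosed, ← f_even 0]
  · intro a ha b hb hab
    simp only [Set.mem_Iio] at ha hb
    obtain ⟨i, rfl | rfl⟩ := Nat.even_or_odd' a <;> obtain ⟨j, rfl | rfl⟩ := Nat.even_or_odd' b
    · rw [f_even, f_even] at hab
      rw [hu (show i < l by omega) (show j < l by omega) hab]
    · exact absurd (f_even i ▸ f_odd j ▸ hab) (hne i (by omega) j (by omega))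
    · exact absurd (f_odd i ▸ f_even j ▸ hab).symm (hne j (by omega) i (by omega))
    · rw [f_odd, f_odd] at hab
      rw [hw (show i < l by omega) (show j < l by omega) hab]

end SimpleGraph

theorem eq_or_endpoints_of_apply_eq {β : Type*} {u : ℕ → β} {l : ℕ} (hclosed : u l = u 0)
    (hu : Set.InjOn u (Set.Iio l)) {a b : ℕ} (ha : a ≤ l) (hb : b ≤ l) (h : u a = u b) :
    a = b ∨ (a = 0 ∧ b = l) ∨ (a = l ∧ b = 0) := by
  rcases ha.lt_or_eq with ha | rfl <;> rcases hb.lt_or_eq with hb | rfl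
  · exact Or.inl (hu ha hb h)
  · exact Or.inr (Or.inl ⟨hu ha (show 0 < b by omega) (h.trans hclosed), rfl⟩)
  · exact Or.inr (Or.inr ⟨rfl, (hu (show 0 < a by omega) hb (hclosed.symm.trans h)).symm⟩)
  · exact Or.inl rfl

theorem injOn_midpoints {n l : ℕ} (hl : 3 ≤ l) {G : SimpleGraph (Equiv.Perm (Fin n))}
    (hG : G ≤ CT n) {x : Equiv.Perm (Fin n)} {u w : ℕ → Equiv.Perm (Fin n)}
    (hux : ∀ j ≤ l, (CT n).Adj x (u j)) (hclosed : u l = u 0) (huinj : Set.InjOn u (Set.Iio l))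
    (hw : ∀ j < l, w j ≠ x ∧ G.Adj (u j) (w j) ∧ G.Adj (w j) (u (j + 1)))
    (hsupp : (∀ j < l, Disjoint ((u j * x⁻¹).support) ((u (j + 1) * x⁻¹).support)) ∨
      (∃ i : Fin n, ∀ j < l,
        (u j * x⁻¹).support ∩ (u (j + 1) * x⁻¹).support = {i})) :
    Set.InjOn w (Set.Iio l) := by
  intro i hi j hj hW
  simp only [Set.mem_Iio] at hi hj
  by_contra hij
  wlog hlt : i < j generalizing i j
  · exact this hW.symm hj hi (Ne.symm hij) (by omega)
  have hcn : ∀ k, (k = i ∨ k = i + 1 ∨ k = j ∨ k = j + 1) →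
      u k ∈ (CT n).commonNeighbors x (w i) := by
    intro k hk
    obtain ⟨-, h₁, h₂⟩ := hw i hi
    obtain ⟨-, h₃, h₄⟩ := hw j hj
    refine ⟨hux k (by omega), ?_⟩
    rcases hk with rfl | rfl | rfl | rfl
    exacts [(hG h₁).symm, hG h₂, hW ▸ (hG h₃).symm, hW ▸ hG h₄]
  have hu : ∀ {a b}, a ≤ l → b ≤ l → u a = u b → a = b ∨ (a = 0 ∧ b = l) ∨ (a = l ∧ b = 0) :=
    eq_or_endpoints_of_apply_eq hclosed huinj
  have hii : u i ≠ u (i + 1) := fun h => by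
    rcases hu (by omega) (by omega) h with _ | _ | _ <;> omega
  obtain ⟨c, hc, hic, hic'⟩ : ∃ c, (c = j ∨ c = j + 1) ∧ u i ≠ u c ∧ u (i + 1) ≠ u c := by
    rcases eq_or_ne j (i + 1) with rfl | hj'
    · refine ⟨i + 2, Or.inr rfl, fun h => ?_, fun h => ?_⟩ <;>
        rcases hu (by omega) (by omega) h with _ | _ | _ <;> omega
    · refine ⟨j, Or.inl rfl, fun h => ?_, fun h => ?_⟩ <;>
        rcases hu (by omega) (by omega) h with _ | _ | _ <;> omega
  obtain ⟨hnd, hnm⟩ := CT.not_disjoint_and_notMem_support_of_commonNeighbors (hw i hi).1.symm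
    hii hic hic' (hcn i (by omega)) (hcn (i + 1) (by omega)) (hcn c (by omega))
  rcases hsupp with hd | ⟨p, hp⟩
  · exact hnd (hd i hi)
  · have hpi := Finset.mem_inter.mp ((hp i hi).symm ▸ Finset.mem_singleton_self p)
    have hpj := Finset.mem_inter.mp ((hp j hj).symm ▸ Finset.mem_singleton_self p)
    exact hnm p hpi.1 hpi.2 (by rcases hc with rfl | rfl; exacts [hpj.1, hpj.2])

theorem stmt_18_general {n l : ℕ} (hl : 3 ≤ l)
    (G : SimpleGraph (Equiv.Perm (Fin n))) (hG : G ≤ CT n)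
    (x : Equiv.Perm (Fin n)) (u w : ℕ → Equiv.Perm (Fin n))
    (hux : ∀ j < l, (CT n).Adj x (u j))
    (hclosed : u l = u 0)
    (huinj : ∀ i j, i < l → j < l → u i = u j → i = j)
    (hw : ∀ j < l, w j ≠ x ∧ G.Adj (u j) (w j) ∧ G.Adj (w j) (u (j + 1)))
    (hsupp : (∀ j < l, Disjoint ((u j * x⁻¹).support) ((u (j + 1) * x⁻¹).support)) ∨
      (∃ i : Fin n, ∀ j < l,
        (u j * x⁻¹).support ∩ (u (j + 1) * x⁻¹).support = {i})) :
    (∀ i j, i < l → j < l → w i = w j → i = j) ∧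
    ∃ (v : Equiv.Perm (Fin n)) (c : G.Walk v v), c.IsCycle ∧ c.length = 2 * l := by
  have hux' : ∀ j ≤ l, (CT n).Adj x (u j) := fun j hj => by
    rcases hj.lt_or_eq with hj | rfl
    · exact hux j hj
    · rw [hclosed]; exact hux 0 (by omega)
  have huinj' : Set.InjOn u (Set.Iio l) := fun a ha b hb h => huinj a b ha hb h
  have hwinj : Set.InjOn w (Set.Iio l) := injOn_midpoints hl hG hux' hclosed huinj' hw hsupp
  refine ⟨fun i j hi hj h => hwinj hi hj h,
    SimpleGraph.exists_isCycle_of_zigzag (by omega) u w (fun j hj => (hw j hj).2.1)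
      (fun j hj => (hw j hj).2.2) hclosed huinj' hwinj fun i hi j hj h => ?_⟩
  have hadj := hG (hw j hj).2.1
  rw [← h] at hadj
  exact CT.not_adj_of_adj_of_adj (hux j hj) (hux i hi) hadj

/-- If `(u 0, …, u (l-1))` is an `l`-cycle in the auxiliary graph `G_x^i` (the `u j`
are neighbors of `x` in `CT n`, consecutive supports of `u j * x⁻¹` either pairwise
disjoint (case `i = 0`) or all meeting in a single common point `i`, witnessed by
midpoints `w j ≠ x` of 2-paths in `G`), then the `w j` are pairwise distinct and
`G` contains a `2l`-cycle. -/
theorem stmt_18 {n l : ℕ} (hn : 3 ≤ n) (hl : 3 ≤ l)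
    (G : SimpleGraph (Equiv.Perm (Fin n))) (hG : G ≤ CT n)
    (x : Equiv.Perm (Fin n)) (u w : ℕ → Equiv.Perm (Fin n))
    (hux : ∀ j < l, (CT n).Adj x (u j))
    (hclosed : u l = u 0)
    (huinj : ∀ i j, i < l → j < l → u i = u j → i = j)
    (hw : ∀ j < l, w j ≠ x ∧ G.Adj (u j) (w j) ∧ G.Adj (w j) (u (j + 1)))
    (hsupp : (∀ j < l, Disjoint ((u j * x⁻¹).support) ((u (j + 1) * x⁻¹).support)) ∨
      (∃ i : Fin n, ∀ j < l,
        (u j * x⁻¹).support ∩ (u (j + 1) * x⁻¹).support = {i})) :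
    (∀ i j, i < l → j < l → w i = w j → i = j) ∧
    ∃ (v : Equiv.Perm (Fin n)) (c : G.Walk v v), c.IsCycle ∧ c.length = 2 * l :=
  stmt_18_general hl G hG x u w hux hclosed huinj hw hsupp
end
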